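/- With σ the switch operator on R^n(F) and σ* := 1 + σ, one has σ*∘σ* = n·σ* on R^n(F) for every n ≥ 1. -/
import Mathlib


open scoped TensorProduct

noncomputable section

variable (A : Type) [CommRing A]
variable (F : Type) [AddCommGroup F] [Module A F]

/-- `n`-fold tensor power `T^n(F)`. -/
abbrev TPow (n : ℕ) := PiTensorProduct A (fun _ : Fin n => F)

/-- The submodule of symmetry relations. -/
def symRel (n : ℕ) : Submodule A (TPow A F n) :=
  Submodule.span A
    {x | ∃ (m : Fin n → F) (e : Equiv.Perm (Fin n)),
      x = PiTensorProduct.tprod A m - PiTensorProduct.tprod A (m ∘ e)}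

/-- Symmetric power `S^n(F)`. -/
abbrev SymPow (n : ℕ) := TPow A F n ⧸ symRel A F n

/-- Class of the word `m₀ ⋯ m_{n-1}` in `S^n(F)`. -/
def mkS {n : ℕ} (m : Fin n → F) : SymPow A F n :=
  Submodule.Quotient.mk (PiTensorProduct.tprod A m)

/-- Class of a list of elements of `F` in the symmetric power. -/
def mkSL (l : List F) : SymPow A F l.length := mkS A F l.get

/-- `RPow A F n` is `R^{n+1}(F) = S^n(F) ⊗_A F`. -/
abbrev RPow (n : ℕ) := SymPow A F n ⊗[A] F

/-- Class of the word `m₀ ⋯ m_n` in `R^{n+1}(F) = S^n(F) ⊗ F`. -/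
def mkR {n : ℕ} (m : Fin (n + 1) → F) : RPow A F n :=
  mkS A F (fun i : Fin n => m i.castSucc) ⊗ₜ[A] m (Fin.last n)

/-- The `i`-th "rotation" of the word `m` appearing in the definition of the
switch operator: `m_n m_{n-1} ⋯ m_{n-i+1} m_0 m_1 ⋯ m_{n-i}` (0-indexed). -/
def rot {n : ℕ} (m : Fin (n + 1) → F) (i : ℕ) : Fin (n + 1) → F := fun j =>
  if j.val < i then m ⟨n - j.val, by have := j.isLt; omega⟩
  else m ⟨j.val - i, by have := j.isLt; omega⟩

/-- `σ` is the switch operator on `R^{n+1}(F)`: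
`σ(m_0⋯m_n) = ∑_{i=1}^{n} m_n m_{n-1}⋯m_{n-i+1} m_0 m_1 ⋯ m_{n-i}`. -/
def IsSwitch (n : ℕ) (σ : RPow A F n →ₗ[A] RPow A F n) : Prop :=
  ∀ m : Fin (n + 1) → F,
    σ (mkR A F m) = ∑ i ∈ Finset.Icc 1 n, mkR A F (rot F m i)

/-- `K^{n+1}(F) = σ*(R^{n+1}(F))`, described by its generators `σ*(m_0⋯m_n)`. -/
def KSub (n : ℕ) : Submodule A (RPow A F n) :=
  Submodule.span A
    {x | ∃ m : Fin (n + 1) → F,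
      x = mkR A F m + ∑ i ∈ Finset.Icc 1 n, mkR A F (rot F m i)}

/-- `K²(F) ⊆ T²(F) = F ⊗ F`: the kernel of `T²(F) → Λ²(F)`, i.e. the image of `1 + σ`. -/
def K2Sub : Submodule A (F ⊗[A] F) :=
  Submodule.span A {x | ∃ u v : F, x = u ⊗ₜ[A] v + v ⊗ₜ[A] u}

/-- The word `m₀ ⋯ m_{p-1} u m'₀ ⋯ m'_{q-1}`. -/
def joinWord {p q : ℕ} (m : Fin p → F) (u : F) (m' : Fin q → F) :
    Fin (p + q + 1) → F := fun j =>
  if h : j.val < p then m ⟨j.val, h⟩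
  else if _h2 : j.val < p + 1 then u
  else m' ⟨j.val - (p + 1), by have := j.isLt; omega⟩

/-- The concatenated word `m₀ ⋯ m_{p-1} m'₀ ⋯ m'_{q-1}`. -/
def appendWord {p q : ℕ} (m : Fin p → F) (m' : Fin q → F) : Fin (p + q) → F := fun j =>
  if h : j.val < p then m ⟨j.val, h⟩
  else m' ⟨j.val - p, by have := j.isLt; omega⟩

/-- `mul` is the multiplication `R^{p+1}(F) × R^{q+1}(F) → R^{p+q+2}(F)` of the graded
algebra `R(F)`, recorded with values in `∏ₖ R^{k+1}(F)`:
`(s ⊗ u)·(s' ⊗ v) = (s u s') ⊗ v`. -/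
def IsMulR (mul : ∀ p q, RPow A F p →ₗ[A] RPow A F q →ₗ[A] ∀ k, RPow A F k) : Prop :=
  ∀ (p q : ℕ) (m : Fin p → F) (u : F) (m' : Fin q → F) (v : F),
    mul p q (mkS A F m ⊗ₜ[A] u) (mkS A F m' ⊗ₜ[A] v)
      = Pi.single (p + q + 1) (mkS A F (joinWord F m u m') ⊗ₜ[A] v)

/-- `mul` is the multiplication `S^p(F) × S^q(F) → S^{p+q}(F)` of the symmetric algebra,
recorded with values in `∏ₖ S^k(F)`. -/
def IsMulS (mul : ∀ p q, SymPow A F p →ₗ[A] SymPow A F q →ₗ[A] ∀ k, SymPow A F k) : Prop :=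
  ∀ (p q : ℕ) (m : Fin p → F) (m' : Fin q → F),
    mul p q (mkS A F m) (mkS A F m') = Pi.single (p + q) (mkS A F (appendWord F m m'))

/-- `π` is the family of natural maps `R^{n+1}(F) = S^n(F) ⊗ F → S^{n+1}(F)`. -/
def IsPi (π : ∀ n, RPow A F n →ₗ[A] SymPow A F (n + 1)) : Prop :=
  ∀ (n : ℕ) (m : Fin n → F) (v : F),
    π n (mkS A F m ⊗ₜ[A] v) = mkS A F (Fin.snoc m v)

/-- `T = (T₀, T₁, …)` is a (full) extended `D`-connection:  `T₀ = id_F` (under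
`F ≅ R¹(F)`), and `T_i(am) = a T_i(m) + ∑_{j=1}^i (1/j) T_{j-1}(D a) T_{i-j}(m)`. -/
def IsExtConn [Algebra ℚ A] (D : A → F)
    (mul : ∀ p q, RPow A F p →ₗ[A] RPow A F q →ₗ[A] ∀ k, RPow A F k)
    (T : ∀ i, F →+ RPow A F i) : Prop :=
  (∀ m : F, T 0 m = mkS A F (fun i : Fin 0 => i.elim0) ⊗ₜ[A] m) ∧
  ∀ (i : ℕ), 1 ≤ i → ∀ (a : A) (m : F),
    Pi.single i (T i (a • m))
      = Pi.single i (a • T i m)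
        + ∑ j ∈ Finset.Icc 1 i,
            algebraMap ℚ A (1 / (j : ℚ)) •
              mul (j - 1) (i - j) (T (j - 1) (D a)) (T (i - j) m)

/-- `T = (T₀, …, T_N)` is an extended `D`-connection up to order `N`. -/
def IsExtConnTo [Algebra ℚ A] (D : A → F)
    (mul : ∀ p q, RPow A F p →ₗ[A] RPow A F q →ₗ[A] ∀ k, RPow A F k)
    (N : ℕ) (T : ∀ i, F →+ RPow A F i) : Prop :=
  (∀ m : F, T 0 m = mkS A F (fun i : Fin 0 => i.elim0) ⊗ₜ[A] m) ∧
  ∀ (i : ℕ), 1 ≤ i → i ≤ N → ∀ (a : A) (m : F),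
    Pi.single i (T i (a • m))
      = Pi.single i (a • T i m)
        + ∑ j ∈ Finset.Icc 1 i,
            algebraMap ℚ A (1 / (j : ℚ)) •
              mul (j - 1) (i - j) (T (j - 1) (D a)) (T (i - j) m)

/-- The wedge map `F ⊗_A F →  Λ(F)`, `u ⊗ v ↦ u ∧ v`; an element of `F ⊗ F` maps to
zero in `Λ²(F)` iff its image under this map is zero. -/
def wedgeMap : F ⊗[A] F →ₗ[A] ExteriorAlgebra A F :=
  TensorProduct.lift
    ((LinearMap.mul A (ExteriorAlgebra A F)).compl₁₂ (ExteriorAlgebra.ι A) (ExteriorAlgebra.ι A))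


lemma mkS_comp_perm {n : ℕ} (m : Fin n → F) (e : Equiv.Perm (Fin n)) :
    mkS A F (m ∘ e) = mkS A F m := by
  rw [mkS, mkS, Submodule.Quotient.eq]
  apply Submodule.subset_span
  refine ⟨m ∘ e, e⁻¹, ?_⟩
  have h2 : (m ∘ ⇑e) ∘ ⇑e⁻¹ = m := by funext x; simp
  rw [h2]

lemma exists_comp_perm {k : ℕ} {α : Type} (f g : Fin k → α)
    (hf : Function.Injective f) (hg : Function.Injective g)
    (h : Set.range f = Set.range g) : ∃ e : Equiv.Perm (Fin k), g = f ∘ e := by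
  have key : ∀ i, ∃ j, f j = g i := by
    intro i
    have : g i ∈ Set.range f := h ▸ Set.mem_range_self i
    exact this
  choose e0 he0 using key
  have hinj : Function.Injective e0 := fun i j hij => hg (by rw [← he0, ← he0, hij])
  exact ⟨Equiv.ofBijective e0 (Finite.injective_iff_bijective.mp hinj),
    funext fun i => (he0 i).symm⟩

lemma mkS_comp_eq {k N : ℕ} (m : Fin N → F) (f g : Fin k → Fin N)
    (hf : Function.Injective f) (hg : Function.Injective g)
    (h : Set.range f = Set.range g) :
    mkS A F (m ∘ g) = mkS A F (m ∘ f) := by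
  obtain ⟨e, rfl⟩ := exists_comp_perm f g hf hg h
  have h2 : m ∘ (f ∘ ⇑e) = (m ∘ f) ∘ ⇑e := rfl
  rw [h2, mkS_comp_perm]

/-- The generator `(product of `m_j`, `j ≠ k`) ⊗ m_k` of `R^{n+1}(F)`. -/
def gen {n : ℕ} (m : Fin (n + 1) → F) (k : Fin (n + 1)) : RPow A F n :=
  mkS A F (fun i => m (k.succAbove i)) ⊗ₜ[A] m k

lemma gen_last {n : ℕ} (m : Fin (n + 1) → F) : gen A F m (Fin.last n) = mkR A F m := by
  rw [gen, mkR]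
  congr 1
  congr 1
  funext i
  rw [Fin.succAbove_last]

lemma mkR_rot {n : ℕ} (m : Fin (n + 1) → F) (i : ℕ) (h1 : 1 ≤ i) (h2 : i ≤ n) :
    mkR A F (rot F m i) = gen A F m ⟨n - i, by omega⟩ := by
  rw [mkR, gen]
  have hlast : rot F m i (Fin.last n) = m ⟨n - i, by omega⟩ := by
    simp only [rot, Fin.val_last]
    rw [if_neg (by omega)]
  rw [hlast]
  congr 1
  set g : Fin n → Fin (n + 1) := fun j =>
    ⟨if j.val < i then n - j.val else j.val - i, by split_ifs <;> omega⟩ with hg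
  have hfg : (fun j : Fin n => rot F m i j.castSucc) = m ∘ g := by
    funext j
    simp only [rot, Fin.coe_castSucc, Function.comp_apply, hg]
    split_ifs <;> rfl
  rw [hfg]
  show mkS A F (m ∘ g) = mkS A F (m ∘ (⟨n - i, by omega⟩ : Fin (n + 1)).succAbove)
  apply mkS_comp_eq
  · exact Fin.succAbove_right_injective
  · intro a b hab
    have hv := congrArg Fin.val hab
    have ha := a.isLt
    have hb := b.isLt
    simp only [hg] at hv
    apply Fin.ext
    split_ifs at hv <;> omega
  · rw [Fin.range_succAbove]
    symm
    ext x
    have hxl := x.isLt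
    simp only [Set.mem_range, Set.mem_compl_iff, Set.mem_singleton_iff]
    constructor
    · rintro ⟨j, rfl⟩ hx
      have hv := congrArg Fin.val hx
      have hj := j.isLt
      simp only [hg] at hv
      split_ifs at hv <;> omega
    · intro hx
      have hx' : x.val ≠ n - i := fun hc => hx (Fin.ext hc)
      by_cases hgt : n - i < x.val
      · refine ⟨⟨n - x.val, by omega⟩, ?_⟩
        apply Fin.ext
        simp only [hg]
        rw [if_pos (by omega)]
        omega
      · refine ⟨⟨x.val + i, by omega⟩, ?_⟩
        apply Fin.ext
        simp only [hg]
        rw [if_neg (by omega)]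
        omega

lemma gen_comp_perm {n : ℕ} (m : Fin (n + 1) → F) (e : Equiv.Perm (Fin (n + 1)))
    (k : Fin (n + 1)) : gen A F (m ∘ e) k = gen A F m (e k) := by
  rw [gen, gen]
  congr 1
  show mkS A F (m ∘ (⇑e ∘ k.succAbove)) = mkS A F (m ∘ (e k).succAbove)
  apply mkS_comp_eq
  · exact Fin.succAbove_right_injective
  · exact e.injective.comp Fin.succAbove_right_injective
  · rw [Set.range_comp, Fin.range_succAbove, Fin.range_succAbove,
      Set.image_compl_eq e.bijective, Set.image_singleton]

lemma sum_rot_eq {n : ℕ} (m : Fin (n + 1) → F) :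
    mkR A F m + ∑ i ∈ Finset.Icc 1 n, mkR A F (rot F m i)
      = ∑ k : Fin (n + 1), gen A F m k := by
  rw [Fin.sum_univ_castSucc, gen_last, add_comm]
  congr 1
  cases n with
  | zero => simp
  | succ n' =>
    refine Finset.sum_nbij' (i := fun a => (⟨n' - (a - 1), by omega⟩ : Fin (n' + 1)))
      (j := fun b => n' + 1 - b.val) ?_ ?_ ?_ ?_ ?_
    · intro a _; exact Finset.mem_univ _
    · intro b _
      have := b.isLt
      simp only [Finset.mem_Icc]
      omega
    · intro a ha
      simp only [Finset.mem_Icc] at ha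
      show n' + 1 - (n' - (a - 1)) = a
      omega
    · intro b _
      have := b.isLt
      apply Fin.ext
      show n' - (n' + 1 - b.val - 1) = b.val
      omega
    · intro a ha
      simp only [Finset.mem_Icc] at ha
      rw [mkR_rot A F m a ha.1 ha.2]
      congr 1
      apply Fin.ext
      simp only [Fin.coe_castSucc]
      omega

lemma switchStar_mkR {n : ℕ} (σ : RPow A F n →ₗ[A] RPow A F n) (hσ : IsSwitch A F n σ)
    (m : Fin (n + 1) → F) :
    (LinearMap.id + σ : RPow A F n →ₗ[A] RPow A F n) (mkR A F m) = ∑ k : Fin (n + 1), gen A F m k := by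
  rw [LinearMap.add_apply, LinearMap.id_apply, hσ m, sum_rot_eq]

lemma switchStar_gen {n : ℕ} (σ : RPow A F n →ₗ[A] RPow A F n) (hσ : IsSwitch A F n σ)
    (m : Fin (n + 1) → F) (k : Fin (n + 1)) :
    (LinearMap.id + σ : RPow A F n →ₗ[A] RPow A F n) (gen A F m k)
      = ∑ k' : Fin (n + 1), gen A F m k' := by
  set h : Fin (n + 1) → Fin (n + 1) := Fin.snoc k.succAbove k with hh
  have hinj : Function.Injective h := by
    intro a b hab
    rcases Fin.eq_castSucc_or_eq_last a with ⟨a', rfl⟩ | rfl <;>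
      rcases Fin.eq_castSucc_or_eq_last b with ⟨b', rfl⟩ | rfl <;>
        simp only [hh, Fin.snoc_castSucc, Fin.snoc_last] at hab
    · rw [Fin.succAbove_right_injective hab]
    · exact absurd hab (Fin.succAbove_ne k a')
    · exact absurd hab.symm (Fin.succAbove_ne k b')
    · rfl
  set e : Equiv.Perm (Fin (n + 1)) :=
    Equiv.ofBijective h (Finite.injective_iff_bijective.mp hinj) with he
  have hecoe : ⇑e = h := rfl
  have key : gen A F m k = mkR A F (m ∘ e) := by
    rw [gen, mkR]
    congr 1
    · congr 1
      funext i
      simp [hecoe, hh, Fin.snoc_castSucc]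
    · simp [hecoe, hh, Fin.snoc_last]
  rw [key, switchStar_mkR A F σ hσ]
  simp_rw [gen_comp_perm]
  exact Equiv.sum_comp e (gen A F m)

/-- With `σ*` := `1 + σ`, one has `σ* ∘ σ* = n · σ*` on `R^n(F)`
(here `RPow A F n = R^{n+1}(F)`, so the scalar is `n + 1`). -/
theorem switchStar_comp_switchStar (n : ℕ)
    (σ : RPow A F n →ₗ[A] RPow A F n) (hσ : IsSwitch A F n σ) :
    (LinearMap.id + σ).comp (LinearMap.id + σ) = (n + 1) • (LinearMap.id + σ) := by
  have hgen : ∀ m : Fin (n + 1) → F,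
      (LinearMap.id + σ : RPow A F n →ₗ[A] RPow A F n)
          ((LinearMap.id + σ : RPow A F n →ₗ[A] RPow A F n) (mkR A F m))
        = (n + 1) • (LinearMap.id + σ : RPow A F n →ₗ[A] RPow A F n) (mkR A F m) := by
    intro m
    rw [switchStar_mkR A F σ hσ, map_sum,
      Finset.sum_congr rfl fun k _ => switchStar_gen A F σ hσ m k,
      Finset.sum_const, Finset.card_univ, Fintype.card_fin]
  apply TensorProduct.ext'
  intro s v
  obtain ⟨t, rfl⟩ := Submodule.Quotient.mk_surjective (symRel A F n) s
  induction t using PiTensorProduct.induction_on with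
  | smul_tprod a w =>
    have h1 : (Submodule.Quotient.mk (a • PiTensorProduct.tprod A w) : SymPow A F n) ⊗ₜ[A] v
        = a • mkR A F (Fin.snoc w v) := by
      rw [Submodule.Quotient.mk_smul, ← TensorProduct.smul_tmul']
      congr 1
      rw [mkR]
      congr 1
      · rw [mkS]
        congr 2
        funext i
        rw [Fin.snoc_castSucc]
      · rw [Fin.snoc_last]
    rw [LinearMap.comp_apply, h1, map_smul, map_smul, hgen (Fin.snoc w v)]
    rw [smul_comm a ((n : ℕ) + 1)]
    rw [← map_smul]
    rfl
  | add x y hx hy =>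
    rw [Submodule.Quotient.mk_add, TensorProduct.add_tmul, map_add, map_add, hx, hy]

end
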